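/- In the abstract Tile Assembly Model, strict self-assembly implies finite self-assembly: for every aTAM tile assembly system 𝒯 = (T, σ, τ) and every set X ⊆ ℤ², if 𝒯 strictly self-assembles X, then 𝒯 finitely self-assembles X. -/
import Mathlib


/-- A point of the integer lattice `ℤ²`. -/
abbrev Pt := ℤ × ℤ

/-- A tile type: a glue (label, drawn from `ℕ`) on each of its four sides.
The strength of a glue label is given by a strength function. -/
structure TileType where
  north : ℕ
  east : ℕ
  south : ℕ
  west : ℕ
deriving DecidableEq

/-- An assembly: a partial function from `ℤ²` to tile types. -/
abbrev Assembly := Pt → Option TileType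

/-- The domain of an assembly. -/
def adom (α : Assembly) : Set Pt := {p | α p ≠ none}

/-- The strength of the bond between the tiles of `α` at positions `p` and `q`
(zero unless `q` is adjacent to `p`, both are tiled, and the abutting glues match). -/
def bond (s : ℕ → ℕ) (α : Assembly) (p q : Pt) : ℕ :=
  match α p, α q with
  | some t, some t' =>
      if q = (p.1 + 1, p.2) then (if t.east = t'.west then s t.east else 0)
      else if q = (p.1 - 1, p.2) then (if t.west = t'.east then s t.west else 0)
      else if q = (p.1, p.2 + 1) then (if t.north = t'.south then s t.north else 0)
      else if q = (p.1, p.2 - 1) then (if t.south = t'.north then s t.south else 0)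
      else 0
  | _, _ => 0

/-- `α` is `τ`-stable: every cut of its binding graph has total glue strength at
least `τ` (witnessed by finitely many bonds crossing the cut). -/
def IsStable (s : ℕ → ℕ) (τ : ℕ) (α : Assembly) : Prop :=
  ∀ A B : Set Pt, A ∪ B = adom α → Disjoint A B → A.Nonempty → B.Nonempty →
    ∃ F : Finset (Pt × Pt), (∀ e ∈ F, e.1 ∈ A ∧ e.2 ∈ B) ∧
      τ ≤ ∑ e ∈ F, bond s α e.1 e.2

/-- The total strength with which a tile of type `t` placed at the empty position `p`
would bind to its already-placed neighbors in `α`. -/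
def attachStrength (s : ℕ → ℕ) (α : Assembly) (p : Pt) (t : TileType) : ℕ :=
  (match α (p.1 + 1, p.2) with
    | some t' => if t.east = t'.west then s t.east else 0
    | none => 0) +
  (match α (p.1 - 1, p.2) with
    | some t' => if t.west = t'.east then s t.west else 0
    | none => 0) +
  (match α (p.1, p.2 + 1) with
    | some t' => if t.north = t'.south then s t.north else 0
    | none => 0) +
  (match α (p.1, p.2 - 1) with
    | some t' => if t.south = t'.north then s t.south else 0
    | none => 0)

/-- An aTAM tile assembly system `𝒯 = (T, σ, τ)`: a glue strength function, a finite
tile set, a finite `τ`-stable seed assembly, and a temperature `τ`. -/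
structure TAS where
  strength : ℕ → ℕ
  tiles : Finset TileType
  seed : Assembly
  temp : ℕ
  seed_finite : (adom seed).Finite
  seed_tiles : ∀ p t, seed p = some t → t ∈ tiles
  seed_stable : IsStable strength temp seed

/-- A single-tile attachment step: a tile of the system attaches at an empty
position with total binding strength at least the temperature. -/
def Step (S : TAS) (α β : Assembly) : Prop :=
  ∃ p t, t ∈ S.tiles ∧ α p = none ∧ S.temp ≤ attachStrength S.strength α p t ∧
    β = Function.update α p (some t)

/-- `β` is the result of a (finite or infinite) sequence of single-tile attachment
steps starting from `α`. -/
def ReachesFrom (S : TAS) (α β : Assembly) : Prop :=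
  ∃ c : ℕ → Assembly, c 0 = α ∧ (∀ n, c (n + 1) = c n ∨ Step S (c n) (c (n + 1))) ∧
    (∀ p n t, c n p = some t → β p = some t) ∧
    (∀ p t, β p = some t → ∃ n, c n p = some t)

/-- A producible assembly: the result of a (finite or infinite) sequence of
single-tile attachment steps starting from the seed. -/
def Producible (S : TAS) (α : Assembly) : Prop := ReachesFrom S S.seed α

/-- A terminal assembly: no tile can attach to it. -/
def Terminal (S : TAS) (α : Assembly) : Prop := ∀ β, ¬ Step S α β

/-- `S` finitely self-assembles `X` if every finite producible assembly of `S` can be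
extended, by a (finite or infinite) sequence of single-tile attachment steps, to an
assembly whose domain is exactly `X`. -/
def FinitelySelfAssembles (S : TAS) (X : Set Pt) : Prop :=
  ∀ α, Producible S α → (adom α).Finite →
    ∃ β, ReachesFrom S α β ∧ adom β = X

/-- `S` strictly self-assembles `X` if every producible terminal assembly of `S`
has domain exactly `X`. -/
def StrictlySelfAssembles (S : TAS) (X : Set Pt) : Prop :=
  ∀ α, Producible S α → Terminal S α → adom α = X


/-! ### Auxiliary lemmas for the proof -/

instance : Countable TileType :=
  Function.Injective.countable (f := fun t : TileType => (t.north, t.east, t.south, t.west))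
    (by rintro ⟨a,b,c,d⟩ ⟨a',b',c',d'⟩ h; simpa using h)

instance : Nonempty TileType := ⟨⟨0,0,0,0⟩⟩

/-- A single attachment step preserves already-placed tiles. -/
lemma step_mono {S : TAS} {α β : Assembly} (h : Step S α β) {p : Pt} {t : TileType}
    (hp : α p = some t) : β p = some t := by
  obtain ⟨q, u, _, hq, _, rfl⟩ := h
  rw [Function.update_apply]
  split
  · next h' => subst h'; rw [hp] at hq; exact absurd hq (by simp)
  · exact hp

/-- A chain of (possibly trivial) steps is monotone. -/
lemma chain_mono {S : TAS} {c : ℕ → Assembly}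
    (hstep : ∀ n, c (n+1) = c n ∨ Step S (c n) (c (n+1)))
    {p : Pt} {t : TileType} {n m : ℕ} (hnm : n ≤ m) (h : c n p = some t) :
    c m p = some t := by
  induction hnm with
  | refl => exact h
  | step _ ih =>
    rename_i k _
    rcases hstep k with he | hs
    · rw [he]; exact ih
    · exact step_mono hs ih

/-- Attachment strength only depends on the four neighbors. -/
lemma attachStrength_congr {s : ℕ → ℕ} {α β : Assembly} {p : Pt} {t : TileType}
    (h1 : α (p.1+1, p.2) = β (p.1+1, p.2)) (h2 : α (p.1-1, p.2) = β (p.1-1, p.2))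
    (h3 : α (p.1, p.2+1) = β (p.1, p.2+1)) (h4 : α (p.1, p.2-1) = β (p.1, p.2-1)) :
    attachStrength s α p t = attachStrength s β p t := by
  unfold attachStrength; rw [h1, h2, h3, h4]

open Classical in
/-- The pointwise limit of a monotone chain of assemblies. -/
noncomputable def limitOf (c : ℕ → Assembly) : Assembly :=
  fun p => if h : ∃ t, ∃ n, c n p = some t then some h.choose else none

lemma limitOf_eq_some {S : TAS} {c : ℕ → Assembly}
    (hstep : ∀ n, c (n+1) = c n ∨ Step S (c n) (c (n+1)))
    {p : Pt} {t : TileType} :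
    limitOf c p = some t ↔ ∃ n, c n p = some t := by
  unfold limitOf
  split
  · next h =>
    obtain ⟨n, hn⟩ := h.choose_spec
    constructor
    · rintro heq
      exact ⟨n, by rwa [Option.some_inj.mp heq] at hn⟩
    · rintro ⟨m, hm⟩
      have h1 := chain_mono hstep (Nat.le_max_left n m) hn
      have h2 := chain_mono hstep (Nat.le_max_right n m) hm
      rw [h1] at h2
      exact congrArg some (Option.some_inj.mp h2)
  · next h =>
    constructor
    · intro heq; exact absurd heq (by simp)
    · rintro ⟨n, hn⟩; exact absurd ⟨t, n, hn⟩ h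

lemma limitOf_none {c : ℕ → Assembly} {p : Pt}
    (h : ∀ n t, c n p ≠ some t) : limitOf c p = none := by
  unfold limitOf
  rw [dif_neg]
  rintro ⟨t, n, hn⟩; exact h n t hn

open Classical in
/-- The greedy attachment step: try to attach tile `v.2` at position `v.1`. -/
noncomputable def gstep (S : TAS) (α : Assembly) (v : Pt × TileType) : Assembly :=
  if v.2 ∈ S.tiles ∧ α v.1 = none ∧ S.temp ≤ attachStrength S.strength α v.1 v.2
  then Function.update α v.1 (some v.2) else α

lemma gstep_step (S : TAS) (α : Assembly) (v : Pt × TileType) :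
    gstep S α v = α ∨ Step S α (gstep S α v) := by
  unfold gstep
  split
  · next h => exact Or.inr ⟨v.1, v.2, h.1, h.2.1, h.2.2, rfl⟩
  · exact Or.inl rfl

lemma gstep_fires {S : TAS} {α : Assembly} {v : Pt × TileType}
    (h : v.2 ∈ S.tiles ∧ α v.1 = none ∧ S.temp ≤ attachStrength S.strength α v.1 v.2) :
    gstep S α v v.1 = some v.2 := by
  unfold gstep
  rw [if_pos h, Function.update_self]

/-- The greedy chain starting from `α`, attempting attachment `enum n` at stage `n`. -/
noncomputable def gchain (S : TAS) (enum : ℕ → Pt × TileType) (α : Assembly) : ℕ → Assembly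
  | 0 => α
  | n + 1 => gstep S (gchain S enum α n) (enum n)

lemma eventually_agree {S : TAS} {c : ℕ → Assembly}
    (hstep : ∀ n, c (n+1) = c n ∨ Step S (c n) (c (n+1)))
    {β : Assembly} (hup : ∀ p n t, c n p = some t → β p = some t)
    (hdown : ∀ p t, β p = some t → ∃ n, c n p = some t) (q : Pt) :
    ∃ N, ∀ n, N ≤ n → c n q = β q := by
  cases hb : β q with
  | none =>
    refine ⟨0, fun n _ => ?_⟩
    cases hc : c n q with
    | none => rfl
    | some t => rw [hup q n t hc] at hb; exact absurd hb (by simp)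
  | some t =>
    obtain ⟨n, hn⟩ := hdown q t hb
    exact ⟨n, fun m hm => chain_mono hstep hm hn⟩

/-- From any assembly we can reach a terminal assembly. -/
lemma exists_terminal_extension (S : TAS) (α : Assembly) :
    ∃ β, ReachesFrom S α β ∧ Terminal S β := by
  obtain ⟨e, he⟩ := exists_surjective_nat (Pt × TileType)
  set enum : ℕ → Pt × TileType := fun n => e (Nat.unpair n).2 with henum
  set c : ℕ → Assembly := gchain S enum α with hc
  have hstep : ∀ n, c (n+1) = c n ∨ Step S (c n) (c (n+1)) := by
    intro n
    rcases gstep_step S (c n) (enum n) with h | h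
    · exact Or.inl h
    · exact Or.inr h
  set β : Assembly := limitOf c with hβ
  have hup : ∀ p n t, c n p = some t → β p = some t := by
    intro p n t h
    exact (limitOf_eq_some hstep).mpr ⟨n, h⟩
  have hdown : ∀ p t, β p = some t → ∃ n, c n p = some t := by
    intro p t h
    exact (limitOf_eq_some hstep).mp h
  refine ⟨β, ⟨c, rfl, hstep, hup, hdown⟩, ?_⟩
  rintro γ ⟨p, t, ht, hnone, hstr, rfl⟩
  -- find a stage after which c agrees with β on p's neighbors
  obtain ⟨N1, h1⟩ := eventually_agree hstep hup hdown (p.1+1, p.2)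
  obtain ⟨N2, h2⟩ := eventually_agree hstep hup hdown (p.1-1, p.2)
  obtain ⟨N3, h3⟩ := eventually_agree hstep hup hdown (p.1, p.2+1)
  obtain ⟨N4, h4⟩ := eventually_agree hstep hup hdown (p.1, p.2-1)
  set N := max (max N1 N2) (max N3 N4) with hN
  obtain ⟨k, hk⟩ := he (p, t)
  set m := Nat.pair N k with hm
  have hmN : N ≤ m := Nat.left_le_pair N k
  have henm : enum m = (p, t) := by
    rw [henum]; simp only [hm, Nat.unpair_pair]; exact hk
  have hcm : c m p = none := by
    cases h : c m p with
    | none => rfl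
    | some u => rw [hup p m u h] at hnone; exact absurd hnone (by simp)
  have hstr' : S.temp ≤ attachStrength S.strength (c m) p t := by
    rw [attachStrength_congr (h1 m (le_trans (le_trans (le_max_left _ _) (le_max_left _ _)) hmN))
      (h2 m (le_trans (le_trans (le_max_right _ _) (le_max_left _ _)) hmN))
      (h3 m (le_trans (le_trans (le_max_left _ _) (le_max_right _ _)) hmN))
      (h4 m (le_trans (le_trans (le_max_right _ _) (le_max_right _ _)) hmN))]
    exact hstr
  have hfire : c (m+1) p = some t := by
    have h5 : c (m+1) = gstep S (c m) (enum m) := rfl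
    rw [h5, henm]
    have := gstep_fires (v := (p, t)) ⟨ht, hcm, hstr'⟩
    simpa using this
  rw [hup p (m+1) t hfire] at hnone
  exact absurd hnone (by simp)

/-- A chain whose limit is finite stabilizes to the limit. -/
lemma chain_stabilizes {S : TAS} {c : ℕ → Assembly} {α : Assembly}
    (hstep : ∀ n, c (n+1) = c n ∨ Step S (c n) (c (n+1)))
    (hup : ∀ p n t, c n p = some t → α p = some t)
    (hdown : ∀ p t, α p = some t → ∃ n, c n p = some t)
    (hfin : (adom α).Finite) :
    ∃ N, c N = α ∧ ∀ n, N ≤ n → c n = c N := by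
  classical
  set F := hfin.toFinset with hF
  set m : ℕ → ℕ := fun n => (F.filter fun p => (c n p).isSome).card with hm
  have hdomF : ∀ n p t, c n p = some t → p ∈ F := by
    intro n p t h
    rw [hF, Set.Finite.mem_toFinset]
    show α p ≠ none
    intro hno
    rw [hup p n t h] at hno; exact absurd hno (by simp)
  have hmono : Monotone m := by
    intro a b hab
    apply Finset.card_le_card
    intro p hp
    simp only [Finset.mem_filter] at hp ⊢
    obtain ⟨t, ht⟩ := Option.isSome_iff_exists.mp hp.2
    exact ⟨hp.1, Option.isSome_iff_exists.mpr ⟨t, chain_mono hstep hab ht⟩⟩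
  have hstrict : ∀ n, c (n+1) ≠ c n → m n < m (n+1) := by
    intro n hne
    rcases hstep n with he | hs
    · exact absurd he hne
    obtain ⟨q, u, _, hq, _, heq⟩ := hs
    apply Finset.card_lt_card
    rw [Finset.ssubset_iff_of_subset]
    · refine ⟨q, ?_, ?_⟩
      · simp only [Finset.mem_filter]
        have hq1 : c (n+1) q = some u := by rw [heq, Function.update_self]
        exact ⟨hdomF (n+1) q u hq1, Option.isSome_iff_exists.mpr ⟨u, hq1⟩⟩
      · simp only [Finset.mem_filter, hq, Option.isSome_none, Bool.false_eq_true,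
          and_false, not_false_eq_true]
    · intro p hp
      simp only [Finset.mem_filter] at hp ⊢
      obtain ⟨t, ht⟩ := Option.isSome_iff_exists.mp hp.2
      exact ⟨hp.1, Option.isSome_iff_exists.mpr ⟨t, chain_mono hstep (Nat.le_succ n) ht⟩⟩
  have hbdd : BddAbove (Set.range m) := by
    refine ⟨F.card, ?_⟩
    rintro x ⟨n, rfl⟩
    exact Finset.card_filter_le _ _
  obtain ⟨N, hN⟩ := Nat.sSup_mem (Set.range_nonempty m) hbdd
  have hconst : ∀ n, N ≤ n → c n = c N := by
    intro n hn
    obtain ⟨k, rfl⟩ := Nat.exists_eq_add_of_le hn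
    clear hn
    induction k with
    | zero => rfl
    | succ k ih =>
      rw [← Nat.add_assoc]
      by_contra hne
      have h1 : c (N + k + 1) ≠ c (N + k) := by
        intro h; rw [h, ih] at hne; exact hne rfl
      have h2 := hstrict (N + k) h1
      have h3 : m (N + k + 1) ≤ sSup (Set.range m) :=
        le_csSup hbdd ⟨N + k + 1, rfl⟩
      have h4 : m N ≤ m (N + k) := hmono (Nat.le_add_right N k)
      rw [← hN] at h3
      omega
  refine ⟨N, ?_, hconst⟩
  funext p
  cases hα : α p with
  | none =>
    cases hcN : c N p with
    | none => rfl
    | some t => rw [hup p N t hcN] at hα; exact absurd hα (by simp)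
  | some t =>
    obtain ⟨n, hn⟩ := hdown p t hα
    have := chain_mono hstep (Nat.le_max_left n N) hn
    rw [hconst (max n N) (Nat.le_max_right n N)] at this
    exact this

/-- Producibility is preserved along further steps, for finite assemblies. -/
lemma producible_trans {S : TAS} {α β : Assembly} (hα : Producible S α)
    (hfin : (adom α).Finite) (h : ReachesFrom S α β) : Producible S β := by
  obtain ⟨c, hc0, hcstep, hcup, hcdown⟩ := hα
  obtain ⟨N, hcN, hconst⟩ := chain_stabilizes hcstep hcup hcdown hfin
  obtain ⟨d, hd0, hdstep, hdup, hddown⟩ := h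
  refine ⟨fun n => if n < N then c n else d (n - N), ?_, ?_, ?_, ?_⟩
  · show (if 0 < N then c 0 else d (0 - N)) = S.seed
    by_cases hN : 0 < N
    · rw [if_pos hN, hc0]
    · have hN0 : N = 0 := by omega
      subst hN0
      rw [if_neg hN, Nat.sub_zero, hd0, ← hcN, hc0]
  · intro n
    show (if n+1 < N then c (n+1) else d (n+1-N)) = (if n < N then c n else d (n-N)) ∨
      Step S (if n < N then c n else d (n-N)) (if n+1 < N then c (n+1) else d (n+1-N))
    by_cases h1 : n + 1 < N
    · rw [if_pos h1, if_pos (by omega : n < N)]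
      exact hcstep n
    · by_cases h2 : n < N
      · have h3 : n + 1 = N := by omega
        rw [if_neg h1, if_pos h2, h3, Nat.sub_self, hd0, ← hcN, ← h3]
        exact hcstep n
      · rw [if_neg h1, if_neg h2, (by omega : n + 1 - N = (n - N) + 1)]
        exact hdstep (n - N)
  · intro p n t ht
    by_cases h1 : n < N
    · simp only [if_pos h1] at ht
      have := hcup p n t ht
      rw [← hd0] at this
      exact hdup p 0 t this
    · simp only [if_neg h1] at ht
      exact hdup p (n - N) t ht
  · intro p t ht
    obtain ⟨n, hn⟩ := hddown p t ht
    refine ⟨N + n, ?_⟩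
    show (if N + n < N then c (N + n) else d (N + n - N)) p = some t
    rw [if_neg (by omega), Nat.add_sub_cancel_left]
    exact hn

/-- In the aTAM, strict self-assembly implies finite
self-assembly. -/
theorem strict_implies_finite_selfAssembly :
    ∀ (S : TAS) (X : Set Pt),
      StrictlySelfAssembles S X → FinitelySelfAssembles S X := by
  intro S X hstrict α hα hfin
  obtain ⟨β, hreach, hterm⟩ := exists_terminal_extension S α
  exact ⟨β, hreach, hstrict β (producible_trans hα hfin hreach) hterm⟩
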